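/- (Proposition 3) For every positive integer m and every complex number α ≠ 0, ∑_{k=1}^m [m over k] · k^α = ∑_{j=1}^m j! · S(α, j) · [m+1 over j+1], where [n over k] denotes the unsigned Stirling number of the first kind. -/

import Mathlib

/-! Since `x (x+1) ⋯ (x+m) = x · P(x+1)` with `P(x) = x (x+1) ⋯ (x+m-1)`, the polynomial
`∑ⱼ [m+1, j+1] xʲ` equals `P(x+1)`. Substituting `x - 1` and comparing coefficients gives
`[m, i] = ∑ⱼ (-1)^(j-i) C(j, i) [m+1, j+1]`; inserting this into the left-hand side and swapping
the sums produces the inner sums `j! S(α, j)`. -/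

open Finset

/-- Stirling function of the second kind with complex argument `α`:
`S(α, k) = (1/k!) ∑_{j=1}^k (-1)^{k-j} C(k, j) j^α`. -/
noncomputable def stirlingS (α : ℂ) (k : ℕ) : ℂ :=
  (1 / (Nat.factorial k : ℂ)) *
    ∑ j ∈ Finset.Icc 1 k, (-1 : ℂ) ^ (k - j) * (Nat.choose k j : ℂ) * (j : ℂ) ^ α

/-- Unsigned Stirling number of the first kind: coefficient of `x^k` in
`x (x+1) ⋯ (x+n-1)`. -/
noncomputable def stirlingFirst (n k : ℕ) : ℕ := (ascPochhammer ℕ n).coeff k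

open Polynomial

section
variable {R : Type*} [CommRing R]

lemma stirlingFirst_cast (n k : ℕ) :
    (stirlingFirst n k : R) = (ascPochhammer R n).coeff k := by
  rw [stirlingFirst, ← ascPochhammer_map (Nat.castRingHom R), coeff_map]
  rfl

lemma ascPochhammer_comp_X_add_one (m : ℕ) :
    (ascPochhammer R m).comp (X + 1) =
      ∑ j ∈ range (m + 1), C (stirlingFirst (m + 1) (j + 1) : R) * X ^ j := by
  have hdeg : ((ascPochhammer R m).comp (X + 1)).natDegree < m + 1 := by
    have hX : (X + 1 : R[X]).natDegree ≤ 1 := by compute_degree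
    have := natDegree_comp_le (p := ascPochhammer R m) (q := X + 1)
    have hP : (ascPochhammer R m).natDegree ≤ m := by
      rw [← ascPochhammer_map (Int.castRingHom R)]
      exact natDegree_map_le.trans (ascPochhammer_natDegree ℤ m).le
    grw [hX, hP] at this
    omega
  conv_lhs => rw [as_sum_range_C_mul_X_pow' _ hdeg]
  refine sum_congr rfl fun j _ => ?_
  rw [stirlingFirst_cast, ascPochhammer_succ_left, coeff_X_mul]

lemma ascPochhammer_eq_sum_X_sub_one_pow (m : ℕ) :
    ascPochhammer R m =
      ∑ j ∈ range (m + 1), C (stirlingFirst (m + 1) (j + 1) : R) * (X - 1) ^ j := by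
  have := congrArg (·.comp (X - 1)) (ascPochhammer_comp_X_add_one (R := R) m)
  simpa [comp_assoc, Polynomial.sum_comp] using this

lemma stirlingFirst_eq_sum_Icc (m i : ℕ) :
    (stirlingFirst m i : R) =
      ∑ j ∈ Icc i m, (-1) ^ (j - i) * (j.choose i : R) * stirlingFirst (m + 1) (j + 1) := by
  rw [stirlingFirst_cast, ascPochhammer_eq_sum_X_sub_one_pow, finsetSum_coeff]
  calc _ = ∑ j ∈ range (m + 1),
        (-1) ^ (j - i) * (j.choose i : R) * stirlingFirst (m + 1) (j + 1) := by
        refine sum_congr rfl fun j _ => ?_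
        rw [coeff_C_mul, sub_eq_add_neg, ← C_1, ← C_neg, coeff_X_add_C_pow, mul_comm]
    _ = _ := by
      refine (sum_subset (fun j hj => ?_) fun j hj hji => ?_).symm
      · simp only [mem_Icc, mem_range] at hj ⊢; omega
      · simp only [mem_Icc, mem_range] at hj hji
        simp [Nat.choose_eq_zero_of_lt (by omega : j < i)]

lemma sum_Icc_stirlingFirst_mul (f : ℕ → R) (m : ℕ) :
    ∑ i ∈ Icc 1 m, (stirlingFirst m i : R) * f i =
      ∑ j ∈ Icc 1 m, (∑ i ∈ Icc 1 j, (-1) ^ (j - i) * (j.choose i : R) * f i) *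
        stirlingFirst (m + 1) (j + 1) := by
  simp_rw [stirlingFirst_eq_sum_Icc (R := R) m, sum_mul]
  rw [sum_comm' (t' := Icc 1 m) (s' := fun j => Icc 1 j) fun i j => by
    simp only [mem_Icc]; omega]
  refine sum_congr rfl fun j _ => sum_congr rfl fun i _ => ?_
  ring

end

lemma factorial_mul_stirlingS (α : ℂ) (k : ℕ) :
    (k.factorial : ℂ) * stirlingS α k =
      ∑ j ∈ Icc 1 k, (-1) ^ (k - j) * (k.choose j : ℂ) * (j : ℂ) ^ α := by
  rw [stirlingS, ← mul_assoc, mul_one_div_cancel (by exact_mod_cast k.factorial_ne_zero), one_mul]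

theorem stmt9_general (m : ℕ) (α : ℂ) :
    ∑ k ∈ Icc 1 m, (stirlingFirst m k : ℂ) * (k : ℂ) ^ α =
      ∑ j ∈ Icc 1 m, (Nat.factorial j : ℂ) * stirlingS α j *
        (stirlingFirst (m + 1) (j + 1) : ℂ) := by
  simp_rw [factorial_mul_stirlingS]
  exact sum_Icc_stirlingFirst_mul (fun k => (k : ℂ) ^ α) m

theorem stmt9 (m : ℕ) (hm : 0 < m) (α : ℂ) (hα : α ≠ 0) :
    ∑ k ∈ Icc 1 m, (stirlingFirst m k : ℂ) * (k : ℂ) ^ α =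
      ∑ j ∈ Icc 1 m, (Nat.factorial j : ℂ) * stirlingS α j *
        (stirlingFirst (m + 1) (j + 1) : ℂ) :=
  stmt9_general m α
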